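/- arXiv:2301.08969 — 6 statements merged into one kernel-verified Lean document; each statement's English description precedes it below -/
import Mathlib

section
/- If C₁ and C₂ are semi-linear subsets of ℕ^d, then the set C₁ - C₂ = {u ∈ ℕ^d | ∃ v ∈ C₂, u + v ∈ C₁} is semi-linear. -/
/-- A linear subset of `ℕ^d`: all vectors `b₀ + z₁•b₁ + ... + z_ℓ•b_ℓ`. -/
def IsLinear {d : ℕ} (S : Set (Fin d → ℕ)) : Prop :=
  ∃ (b₀ : Fin d → ℕ) (ℓ : ℕ) (b : Fin ℓ → Fin d → ℕ),
    S = {v | ∃ z : Fin ℓ → ℕ, v = b₀ + ∑ i, z i • b i}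

/-- A semi-linear subset of `ℕ^d`: a finite union of linear sets. -/
def IsSemilinear {d : ℕ} (S : Set (Fin d → ℕ)) : Prop :=
  ∃ (n : ℕ) (T : Fin n → Set (Fin d → ℕ)), (∀ i, IsLinear (T i)) ∧ S = ⋃ i, T i

/-- The number of input-consuming steps among the first `i` steps. -/
def readCount (reads : ℕ → Bool) (i : ℕ) : ℕ :=
  ((Finset.range i).filter (fun j => reads j = true)).card

/-- A run of an ε-free vector-labeled automaton on the infinite word `α`:
`p` is the state sequence, `v i` the vector of the `i`-th transition. -/
def IsRun {Q Sig : Type} {d : ℕ} (q0 : Q) (Δ : Set (Q × Sig × (Fin d → ℕ) × Q))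
    (α : ℕ → Sig) (p : ℕ → Q) (v : ℕ → Fin d → ℕ) : Prop :=
  p 0 = q0 ∧ ∀ i, (p i, α i, v i, p (i + 1)) ∈ Δ

/-- A run of an automaton with ε-transitions `E` on the infinite word `α`;
`reads i = true` iff the `i`-th transition consumes an input symbol, and
infinitely many transitions must consume a symbol. -/
def IsEpsRun {Q Sig : Type} {d : ℕ} (q0 : Q) (Δ : Set (Q × Sig × (Fin d → ℕ) × Q))
    (E : Set (Q × (Fin d → ℕ) × Q)) (α : ℕ → Sig) (p : ℕ → Q) (v : ℕ → Fin d → ℕ)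
    (reads : ℕ → Bool) : Prop :=
  p 0 = q0 ∧ (∀ N, ∃ i, N ≤ i ∧ reads i = true) ∧
    ∀ i, if reads i then (p i, α (readCount reads i), v i, p (i + 1)) ∈ Δ
      else (p i, v i, p (i + 1)) ∈ E

/-- Prefix-acceptance: infinitely many positions `n ≥ 1` where the current state is
accepting and the accumulated vector sum lies in the (state-dependent) semi-linear set. -/
def PrefixCond {Q : Type} {d : ℕ} (F : Set Q) (C : Q → Set (Fin d → ℕ))
    (p : ℕ → Q) (v : ℕ → Fin d → ℕ) : Prop :=
  ∀ N, ∃ n, N ≤ n ∧ 1 ≤ n ∧ p n ∈ F ∧ (∑ j ∈ Finset.range n, v j) ∈ C (p n)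

/-- Weak reset-acceptance: there are infinitely many reset positions `0 = k 0 < k 1 < ...`
such that each `p (k (i+1))` is accepting and the vector sum between consecutive
reset positions lies in the corresponding semi-linear set. -/
def WeakCond {Q : Type} {d : ℕ} (F : Set Q) (C : Q → Set (Fin d → ℕ))
    (p : ℕ → Q) (v : ℕ → Fin d → ℕ) : Prop :=
  ∃ k : ℕ → ℕ, k 0 = 0 ∧ StrictMono k ∧
    ∀ i, p (k (i + 1)) ∈ F ∧
      (∑ j ∈ Finset.Ico (k i) (k (i + 1)), v j) ∈ C (p (k (i + 1)))

/-- Strong reset-acceptance: `k 1 < k 2 < ...` enumerates *all* positions `n ≥ 1` of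
accepting states (so there are infinitely many), and the vector sum between any two
consecutive such positions (with `k 0 = 0`) lies in the corresponding semi-linear set. -/
def StrongCond {Q : Type} {d : ℕ} (F : Set Q) (C : Q → Set (Fin d → ℕ))
    (p : ℕ → Q) (v : ℕ → Fin d → ℕ) : Prop :=
  ∃ k : ℕ → ℕ, k 0 = 0 ∧ StrictMono k ∧
    (∀ n, 1 ≤ n → (p n ∈ F ↔ ∃ i, 1 ≤ i ∧ k i = n)) ∧
    ∀ i, (∑ j ∈ Finset.Ico (k i) (k (i + 1)), v j) ∈ C (p (k (i + 1)))

/-- A Parikh(-Büchi) automaton of dimension `d` (also used as a Parikh automaton on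
finite words): finitely many states, vector-labeled transitions, a semi-linear set `C`. -/
structure PBA (Sig : Type) (d : ℕ) where
  Q : Type
  fin : Fintype Q
  q0 : Q
  Δ : Set (Q × Sig × (Fin d → ℕ) × Q)
  F : Set Q
  C : Set (Fin d → ℕ)

attribute [instance] PBA.fin

/-- `P_ω(A)`: the ω-language recognized under prefix-acceptance (PPBA). -/
def PBA.PrefixLang {Sig d} (A : PBA Sig d) : Set (ℕ → Sig) :=
  {α | ∃ p v, IsRun A.q0 A.Δ α p v ∧ PrefixCond A.F (fun _ => A.C) p v}

/-- `W_ω(A)`: the ω-language recognized under weak reset-acceptance (WPBA). -/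
def PBA.WeakLang {Sig d} (A : PBA Sig d) : Set (ℕ → Sig) :=
  {α | ∃ p v, IsRun A.q0 A.Δ α p v ∧ WeakCond A.F (fun _ => A.C) p v}

/-- `S_ω(A)`: the ω-language recognized under strong reset-acceptance (SPBA). -/
def PBA.StrongLang {Sig d} (A : PBA Sig d) : Set (ℕ → Sig) :=
  {α | ∃ p v, IsRun A.q0 A.Δ α p v ∧ StrongCond A.F (fun _ => A.C) p v}

/-- Acceptance of a finite word by a Parikh automaton. -/
def PBA.FinAccepts {Sig d} (A : PBA Sig d) (w : List Sig) : Prop :=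
  ∃ (p : ℕ → A.Q) (v : ℕ → Fin d → ℕ),
    p 0 = A.q0 ∧ (∀ i : Fin w.length, (p i, w.get i, v i, p (i + 1)) ∈ A.Δ) ∧
    p w.length ∈ A.F ∧ (∑ j ∈ Finset.range w.length, v j) ∈ A.C

/-- `L(A)`: the language of finite words recognized by a Parikh automaton. -/
def PBA.FinLang {Sig d} (A : PBA Sig d) : Set (List Sig) := {w | A.FinAccepts w}

/-- A Parikh-Büchi automaton with ε-transitions. -/
structure EpsPBA (Sig : Type) (d : ℕ) where
  Q : Type
  fin : Fintype Q
  q0 : Q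
  Δ : Set (Q × Sig × (Fin d → ℕ) × Q)
  E : Set (Q × (Fin d → ℕ) × Q)
  F : Set Q
  C : Set (Fin d → ℕ)

attribute [instance] EpsPBA.fin

def EpsPBA.PrefixLang {Sig d} (A : EpsPBA Sig d) : Set (ℕ → Sig) :=
  {α | ∃ p v reads, IsEpsRun A.q0 A.Δ A.E α p v reads ∧ PrefixCond A.F (fun _ => A.C) p v}

def EpsPBA.WeakLang {Sig d} (A : EpsPBA Sig d) : Set (ℕ → Sig) :=
  {α | ∃ p v reads, IsEpsRun A.q0 A.Δ A.E α p v reads ∧ WeakCond A.F (fun _ => A.C) p v}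

def EpsPBA.StrongLang {Sig d} (A : EpsPBA Sig d) : Set (ℕ → Sig) :=
  {α | ∃ p v reads, IsEpsRun A.q0 A.Δ A.E α p v reads ∧ StrongCond A.F (fun _ => A.C) p v}

/-- A Multi-PBA: every (accepting) state carries its own semi-linear set. -/
structure MPBA (Sig : Type) (d : ℕ) where
  Q : Type
  fin : Fintype Q
  q0 : Q
  Δ : Set (Q × Sig × (Fin d → ℕ) × Q)
  F : Set Q
  C : Q → Set (Fin d → ℕ)

attribute [instance] MPBA.fin

def MPBA.PrefixLang {Sig d} (A : MPBA Sig d) : Set (ℕ → Sig) :=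
  {α | ∃ p v, IsRun A.q0 A.Δ α p v ∧ PrefixCond A.F A.C p v}

/-- A Multi-PBA with ε-transitions. -/
structure EpsMPBA (Sig : Type) (d : ℕ) where
  Q : Type
  fin : Fintype Q
  q0 : Q
  Δ : Set (Q × Sig × (Fin d → ℕ) × Q)
  E : Set (Q × (Fin d → ℕ) × Q)
  F : Set Q
  C : Q → Set (Fin d → ℕ)

attribute [instance] EpsMPBA.fin

def EpsMPBA.StrongLang {Sig d} (A : EpsMPBA Sig d) : Set (ℕ → Sig) :=
  {α | ∃ p v reads, IsEpsRun A.q0 A.Δ A.E α p v reads ∧ StrongCond A.F A.C p v}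

/-- A language of finite words is Parikh-recognizable. -/
def ParikhRec {Sig : Type} (L : Set (List Sig)) : Prop :=
  ∃ d, ∃ A : PBA Sig d, IsSemilinear A.C ∧ A.FinLang = L

/-- An ω-language is PPBA-recognizable. -/
def PPBARec {Sig : Type} (L : Set (ℕ → Sig)) : Prop :=
  ∃ d, ∃ A : PBA Sig d, IsSemilinear A.C ∧ A.PrefixLang = L

/-- An ω-language is SPBA-recognizable. -/
def SPBARec {Sig : Type} (L : Set (ℕ → Sig)) : Prop :=
  ∃ d, ∃ A : PBA Sig d, IsSemilinear A.C ∧ A.StrongLang = L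

/-- Concatenation of a language of finite words with an ω-language. -/
def CatLang {Sig : Type} (L₁ : Set (List Sig)) (L₂ : Set (ℕ → Sig)) : Set (ℕ → Sig) :=
  {α | ∃ u ∈ L₁, ∃ β ∈ L₂,
    (∀ i : Fin u.length, α i = u.get i) ∧ ∀ n, β n = α (u.length + n)}

/-- `α` is the concatenation `w 0 ++ w 1 ++ w 2 ++ ⋯` of the finite words `w i`. -/
def IsOmegaConcat {Sig : Type} (w : ℕ → List Sig) (α : ℕ → Sig) : Prop :=
  ∀ n : ℕ, ∀ i : Fin (((List.range n).map w).flatten.length),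
    ((List.range n).map w).flatten.get i = α i

/-- The ω-power `L^ω = {w₁w₂w₃⋯ ∣ w_i ∈ L ∖ {ε}}`. -/
def OmegaPower {Sig : Type} (L : Set (List Sig)) : Set (ℕ → Sig) :=
  {α | ∃ w : ℕ → List Sig, (∀ i, w i ∈ L) ∧ (∀ i, w i ≠ []) ∧ IsOmegaConcat w α}

/-- Kleene star of a set of finite words. -/
def ListStar {Sig : Type} (L : Set (List Sig)) : Set (List Sig) :=
  {w | ∃ ws : List (List Sig), (∀ u ∈ ws, u ∈ L) ∧ w = ws.flatten}

/-- A (nondeterministic) Büchi automaton. -/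
structure BuchiNFA (Sig : Type) where
  Q : Type
  fin : Fintype Q
  q0 : Q
  Δ : Set (Q × Sig × Q)
  F : Set Q

attribute [instance] BuchiNFA.fin

def BuchiNFA.Lang {Sig} (B : BuchiNFA Sig) : Set (ℕ → Sig) :=
  {α | ∃ p : ℕ → B.Q, p 0 = B.q0 ∧ (∀ i, (p i, α i, p (i + 1)) ∈ B.Δ) ∧
    ∀ N, ∃ n, N ≤ n ∧ p n ∈ B.F}

/-- An ω-language is ω-regular if it is recognized by a Büchi automaton. -/
def OmegaRegular {Sig : Type} (R : Set (ℕ → Sig)) : Prop := ∃ B : BuchiNFA Sig, B.Lang = R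

/-- A blind `k`-counter machine: transitions are labeled by a letter or ε (`Option Sig`)
and an integer vector. -/
structure CM (Sig : Type) (k : ℕ) where
  Q : Type
  fin : Fintype Q
  q0 : Q
  Δ : Set (Q × Option Sig × (Fin k → ℤ) × Q)
  F : Set Q

attribute [instance] CM.fin

/-- The ω-language of a blind counter machine: some run reads every symbol of `α`
and is infinitely often in an accepting state with all counters equal to `0`. -/
def CM.Lang {Sig k} (M : CM Sig k) : Set (ℕ → Sig) :=
  {α | ∃ (p : ℕ → M.Q) (v : ℕ → Fin k → ℤ) (reads : ℕ → Bool),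
    p 0 = M.q0 ∧ (∀ N, ∃ i, N ≤ i ∧ reads i = true) ∧
    (∀ i, if reads i then (p i, some (α (readCount reads i)), v i, p (i + 1)) ∈ M.Δ
      else (p i, (none : Option Sig), v i, p (i + 1)) ∈ M.Δ) ∧
    ∀ N, ∃ n, N ≤ n ∧ p n ∈ M.F ∧ (∑ j ∈ Finset.range n, v j) = 0}

/-!
`C₁ - C₂` is the image under `(u, v) ↦ u` of the set of pairs with `v ∈ C₂` and `u + v ∈ C₁`,
an intersection of preimages of semilinear sets under additive maps. Semilinear sets in a finitely
generated commutative monoid are closed under preimages, intersections and images (the first two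
rest on the semilinearity of solution sets of linear equations, Ginsburg–Spanier), so it only remains
to identify `IsSemilinear` with Mathlib's `IsSemilinearSet`.
-/

open Set Pointwise

theorem isLinear_iff_isLinearSet {d : ℕ} {S : Set (Fin d → ℕ)} :
    IsLinear S ↔ IsLinearSet S := by
  rw [isLinearSet_iff_exists_fin_addMonoidHom]
  constructor
  · rintro ⟨b₀, ℓ, b, rfl⟩
    refine ⟨b₀, ℓ, (Fintype.linearCombination ℕ b).toAddMonoidHom, ?_⟩
    ext v
    simp [mem_vadd_set, Fintype.linearCombination_apply, eq_comm]
  · rintro ⟨a, n, f, rfl⟩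
    refine ⟨a, n, fun i => f fun j => if i = j then 1 else 0, ?_⟩
    ext v
    have hf (z : Fin n → ℕ) : ∑ i, z i • (f fun j => if i = j then 1 else 0) = f z :=
      (LinearMap.pi_apply_eq_sum_univ f.toNatLinearMap z).symm
    simp only [mem_vadd_set, mem_range, vadd_eq_add, exists_exists_eq_and, mem_ofPred_eq, hf]
    exact exists_congr fun _ => eq_comm

theorem isSemilinear_iff_isSemilinearSet {d : ℕ} {S : Set (Fin d → ℕ)} :
    IsSemilinear S ↔ IsSemilinearSet S := by
  constructor
  · rintro ⟨n, T, hT, rfl⟩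
    exact .iUnion fun i => (isLinear_iff_isLinearSet.mp (hT i)).isSemilinearSet
  · rintro ⟨𝒯, h𝒯, hlin, rfl⟩
    obtain ⟨n, T, -, rfl⟩ := h𝒯.fin_param
    exact ⟨n, T, fun i => isLinear_iff_isLinearSet.mpr (hlin _ (mem_range_self i)),
      sUnion_range T⟩

theorem IsSemilinearSet.setOf_exists_add_mem {M : Type*} [AddCommMonoid M] [AddMonoid.FG M]
    {s₁ s₂ : Set M} (h₁ : IsSemilinearSet s₁) (h₂ : IsSemilinearSet s₂) :
    IsSemilinearSet {u | ∃ v ∈ s₂, u + v ∈ s₁} := by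
  have hpairs : IsSemilinearSet ((AddMonoidHom.snd M M ⁻¹' s₂) ∩
      ((AddMonoidHom.id M).coprod (AddMonoidHom.id M) ⁻¹' s₁)) :=
    (h₂.preimage _).inter (h₁.preimage _)
  convert hpairs.image (AddMonoidHom.fst M M) using 1
  ext u
  simp

/-- If `C₁` and `C₂` are semi-linear subsets of `ℕ^d`, then
`C₁ - C₂ = {u ∣ ∃ v ∈ C₂, u + v ∈ C₁}` is semi-linear. -/
theorem semilinear_sub {d : ℕ} (C₁ C₂ : Set (Fin d → ℕ))
    (h₁ : IsSemilinear C₁) (h₂ : IsSemilinear C₂) :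
    IsSemilinear {u : Fin d → ℕ | ∃ v ∈ C₂, u + v ∈ C₁} := by
  rw [isSemilinear_iff_isSemilinearSet] at *
  exact h₁.setOf_exists_add_mem h₂
end

section
/- For every finite alphabet Γ ⊆ ℕ^k and every regular language L over Γ, the set ∑L = {w₁ + w₂ + ... + w_n | w₁...w_n ∈ L} of componentwise sums of letters of words in L is a semi-linear subset of ℕ^k. -/
/-! Kleene's state elimination, carried out on sums of words rather than on words. Let
`S_A(q, q')` be the set of sums of the words leading from `q` to `q'` whose intermediate
states all lie in `A`. Cutting such a word at its visits of a new state `r` gives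
`S_{A ∪ {r}}(q, q') = S_A(q, q') ∪ (S_A(q, r) + ⟨S_A(r, r)⟩ + S_A(r, q'))`, where `⟨·⟩` is the
generated additive submonoid. Semilinear sets contain the finite sets and are closed under
union, sum and submonoid closure, so induction on `A` makes every `S_A(q, q')` semilinear; the
sums of an accepted language form the finite union of the `S_univ(start, q')` over accepting `q'`.
The base case `S_∅(q, q')` is finite once the DFA is restricted to the finite alphabet `Γ`. -/

open Set Pointwise AddSubmonoid

theorem IsLinearSet.isLinear {d : ℕ} {S : Set (Fin d → ℕ)} (h : IsLinearSet S) : IsLinear S := by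
  obtain ⟨b₀, t, ht, rfl⟩ := h
  obtain ⟨ℓ, b, rfl⟩ := ht.fin_embedding
  refine ⟨b₀, ℓ, b, ?_⟩
  ext v
  simp only [mem_vadd_set, SetLike.mem_coe, mem_closure_range_iff_of_fintype, vadd_eq_add,
    mem_ofPred_eq]
  constructor
  · rintro ⟨_, ⟨z, rfl⟩, rfl⟩
    exact ⟨z, rfl⟩
  · rintro ⟨z, rfl⟩
    exact ⟨_, ⟨z, rfl⟩, rfl⟩

theorem IsSemilinearSet.isSemilinear {d : ℕ} {S : Set (Fin d → ℕ)} (h : IsSemilinearSet S) :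
    IsSemilinear S := by
  obtain ⟨𝒮, h𝒮, hlin, rfl⟩ := h
  obtain ⟨n, T, rfl⟩ := h𝒮.fin_embedding
  exact ⟨n, T, fun i => (hlin _ (mem_range_self i)).isLinear, (sUnion_range _).symm⟩

namespace DFA

variable {α σ N : Type*} [AddCommMonoid N] (M : DFA α σ)

def PathThrough (A : Set σ) : σ → List α → σ → Prop
  | q, [], q' => q = q'
  | q, [a], q' => M.step q a = q'
  | q, a :: b :: w, q' => M.step q a ∈ A ∧ PathThrough A (M.step q a) (b :: w) q'

variable {M}

theorem pathThrough_univ : ∀ {q : σ} {w : List α} {q' : σ},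
    M.PathThrough univ q w q' ↔ M.evalFrom q w = q'
  | _, [], _ => Iff.rfl
  | _, [_], _ => Iff.rfl
  | _, _ :: b :: w, _ => by
    simp only [PathThrough, mem_univ, true_and, pathThrough_univ, evalFrom_cons]

theorem PathThrough.mono {A B : Set σ} (hAB : A ⊆ B) :
    ∀ {q : σ} {w : List α} {q' : σ}, M.PathThrough A q w q' → M.PathThrough B q w q'
  | _, [], _, h => h
  | _, [_], _, h => h
  | _, _ :: _ :: _, _, ⟨hA, h⟩ => ⟨hAB hA, h.mono hAB⟩

theorem PathThrough.append {A : Set σ} {r : σ} (hr : r ∈ A) :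
    ∀ {q : σ} {u v : List α} {q' : σ}, M.PathThrough A q u r → M.PathThrough A r v q' →
      M.PathThrough A q (u ++ v) q'
  | _, [], _, _, rfl, h => h
  | _, [_], [], _, h, rfl => h
  | _, [_], _ :: _, _, (h : M.step _ _ = _), h' => ⟨h ▸ hr, h ▸ h'⟩
  | _, _ :: b :: u, _, _, ⟨hA, h⟩, h' => ⟨hA, h.append hr (u := b :: u) h'⟩

theorem PathThrough.split_insert {A : Set σ} {r : σ} :
    ∀ {q : σ} {w : List α} {q' : σ}, M.PathThrough (insert r A) q w q' →
      M.PathThrough A q w q' ∨ ∃ u v, u ≠ [] ∧ w = u ++ v ∧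
        M.PathThrough A q u r ∧ M.PathThrough (insert r A) r v q'
  | _, [], _, h => .inl h
  | _, [_], _, h => .inl h
  | q, a :: b :: w, _, ⟨hA, h⟩ => by
    rcases hA with hr | hA
    · exact .inr ⟨[a], b :: w, by simp, rfl, hr, hr ▸ h⟩
    rcases h.split_insert with h | ⟨u, v, hu, hw, hu', hv⟩
    · exact .inl ⟨hA, h⟩
    · obtain ⟨c, u, rfl⟩ := List.exists_cons_of_ne_nil hu
      exact .inr ⟨a :: c :: u, v, by simp, by simp [hw], ⟨hA, hu'⟩, hv⟩

variable (M)

def pathSums (f : α → N) (A : Set σ) (q q' : σ) : Set N :=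
  {x | ∃ w, M.PathThrough A q w q' ∧ (w.map f).sum = x}

variable {M} {f : α → N}

theorem pathSums_empty_subset (q q' : σ) : M.pathSums f ∅ q q' ⊆ insert 0 (range f) := by
  rintro _ ⟨(_ | ⟨a, _ | ⟨b, w⟩⟩), h, rfl⟩
  · exact mem_insert _ _
  · simp
  · exact absurd h.1 (notMem_empty _)

theorem pathSums_mono {A B : Set σ} (hAB : A ⊆ B) (q q' : σ) :
    M.pathSums f A q q' ⊆ M.pathSums f B q q' := by
  rintro _ ⟨w, h, rfl⟩
  exact ⟨w, h.mono hAB, rfl⟩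

theorem add_mem_pathSums {A : Set σ} {q r q' : σ} (hr : r ∈ A) {x y : N}
    (hx : x ∈ M.pathSums f A q r) (hy : y ∈ M.pathSums f A r q') :
    x + y ∈ M.pathSums f A q q' := by
  obtain ⟨u, hu, rfl⟩ := hx
  obtain ⟨v, hv, rfl⟩ := hy
  exact ⟨u ++ v, hu.append hr hv, by simp⟩

theorem sum_mem_closure_add_of_pathThrough_insert {A : Set σ} {r q' : σ} {w : List α}
    (h : M.PathThrough (insert r A) r w q') :
    (w.map f).sum ∈ (closure (M.pathSums f A r r) : Set N) + M.pathSums f A r q' := by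
  rcases h.split_insert with h | ⟨u, v, hu, hw, hu', hv⟩
  · exact ⟨0, zero_mem _, _, ⟨w, h, rfl⟩, zero_add _⟩
  obtain ⟨x, hx, y, hy, hxy⟩ := mem_add.1 (sum_mem_closure_add_of_pathThrough_insert hv)
  refine mem_add.2 ⟨_, add_mem (subset_closure ⟨u, hu', rfl⟩) hx, y, hy, ?_⟩
  simp [hw, ← hxy, add_assoc]
termination_by w.length
decreasing_by
  rw [hw, List.length_append]
  exact Nat.lt_add_of_pos_left (List.length_pos_iff.2 hu)

theorem add_mem_pathSums_insert_of_mem_closure {A : Set σ} {r q' : σ} {x y : N}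
    (hx : x ∈ closure (M.pathSums f A r r)) (hy : y ∈ M.pathSums f (insert r A) r q') :
    x + y ∈ M.pathSums f (insert r A) r q' := by
  induction hx using closure_induction generalizing y with
  | mem x hx =>
    exact add_mem_pathSums (mem_insert r A) (pathSums_mono (subset_insert r A) _ _ hx) hy
  | zero => simpa using hy
  | add x x' _ _ ih ih' =>
    rw [add_assoc]
    exact ih (ih' hy)

theorem pathSums_insert (A : Set σ) (r q q' : σ) :
    M.pathSums f (insert r A) q q' = M.pathSums f A q q' ∪
      (M.pathSums f A q r + (closure (M.pathSums f A r r) : Set N) + M.pathSums f A r q') := by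
  refine Subset.antisymm ?_ (union_subset (pathSums_mono (subset_insert r A) q q') ?_)
  · rintro _ ⟨w, h, rfl⟩
    rcases h.split_insert with h | ⟨u, v, -, rfl, hu, hv⟩
    · exact .inl ⟨w, h, rfl⟩
    · obtain ⟨x, hx, y, hy, hxy⟩ := sum_mem_closure_add_of_pathThrough_insert (f := f) hv
      refine .inr ⟨_, ⟨_, ⟨u, hu, rfl⟩, x, hx, rfl⟩, y, hy, ?_⟩
      simp [← hxy, add_assoc]
  · intro z hz
    obtain ⟨_, hxc, y, hy, rfl⟩ := mem_add.1 hz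
    obtain ⟨x, hx, c, hc, rfl⟩ := mem_add.1 hxc
    rw [add_assoc]
    exact add_mem_pathSums (mem_insert r A) (pathSums_mono (subset_insert r A) _ _ hx)
      (add_mem_pathSums_insert_of_mem_closure hc (pathSums_mono (subset_insert r A) _ _ hy))

variable (M)

theorem isSemilinearSet_pathSums [Finite α] (f : α → N) {A : Set σ} (hA : A.Finite) (q q' : σ) :
    IsSemilinearSet (M.pathSums f A q q') := by
  induction A, hA using Finite.induction_on generalizing q q' with
  | empty => exact .of_finite (((finite_range f).insert 0).subset (pathSums_empty_subset q q'))
  | @insert r A _ _ ih =>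
    rw [pathSums_insert]
    exact (ih q q').union (((ih q r).add (ih r r).closure).add (ih r q'))

theorem image_sum_accepts_eq_biUnion_pathSums (f : α → N) :
    (fun w => (w.map f).sum) '' M.accepts = ⋃ q' ∈ M.accept, M.pathSums f univ M.start q' := by
  ext x
  simp only [mem_iUnion, pathSums, pathThrough_univ, exists_prop, mem_ofPred_eq]
  constructor
  · rintro ⟨w, hw, rfl⟩
    exact ⟨M.eval w, hw, w, rfl, rfl⟩
  · rintro ⟨_, hw, w, rfl, rfl⟩
    exact ⟨w, hw, rfl⟩

theorem isSemilinearSet_image_sum_accepts [Finite α] [Finite σ] (f : α → N) :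
    IsSemilinearSet ((fun w => (w.map f).sum) '' M.accepts) := by
  rw [image_sum_accepts_eq_biUnion_pathSums]
  exact .biUnion (toFinite _) fun q' _ => M.isSemilinearSet_pathSums f (toFinite _) _ _

end DFA

/-- For every finite alphabet `Γ ⊆ ℕ^k` and every regular language `L` over `Γ`,
the set `∑L` of componentwise sums of the letters of words of `L` is semi-linear. -/
theorem semilinear_sum_of_regular {k : ℕ} (Γ : Finset (Fin k → ℕ))
    (L : Language (Fin k → ℕ)) (hΓ : ∀ w ∈ L, ∀ a ∈ w, a ∈ Γ)
    (hL : L.IsRegular) :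
    IsSemilinear {s : Fin k → ℕ | ∃ w ∈ L, s = w.sum} := by
  obtain ⟨σ, _, M, rfl⟩ := hL
  have hsums : {s | ∃ w ∈ M.accepts, s = w.sum} =
      (fun w => (w.map (↑)).sum) '' (M.comap ((↑) : Γ → Fin k → ℕ)).accepts := by
    ext s
    constructor
    · rintro ⟨w, hw, rfl⟩
      lift w to List Γ using hΓ w hw
      exact ⟨w, by rwa [DFA.accepts_comap], rfl⟩
    · rintro ⟨w, hw, rfl⟩
      exact ⟨w.map (↑), by rwa [DFA.accepts_comap] at hw, rfl⟩
  rw [hsums]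
  exact ((M.comap _).isSemilinearSet_image_sum_accepts _).isSemilinear
end

section
/- Every ε-SPBA is equivalent to an ε-WPBA with the same number of states and one additional counter; in particular, every ω-language recognized by a PBA with strong reset-acceptance is recognized by a PBA with weak reset-acceptance. -/
open scoped Classical

/-- For a strictly monotone `k` with `k 0 = 0`, every `n ≥ 1` lies in some
interval `(k i, k (i+1)]`. -/
lemma exists_interval_aux {k : ℕ → ℕ} (hk0 : k 0 = 0) (hks : StrictMono k)
    {n : ℕ} (hn : 1 ≤ n) : ∃ i, k i < n ∧ n ≤ k (i + 1) := by
  have hP : ∃ j, n ≤ k (j + 1) := by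
    refine ⟨n - 1, ?_⟩
    have : n - 1 + 1 ≤ k (n - 1 + 1) := hks.le_apply
    omega
  refine ⟨Nat.find hP, ?_, Nat.find_spec hP⟩
  rcases Nat.eq_zero_or_pos (Nat.find hP) with h0 | hpos
  · rw [h0, hk0]; omega
  · have hmin := Nat.find_min hP (Nat.sub_lt hpos one_pos)
    have heq : Nat.find hP - 1 + 1 = Nat.find hP := by omega
    rw [heq] at hmin
    omega

/-- Every ε-SPBA is equivalent to an ε-WPBA with the same number of states and
one additional counter. -/
theorem epsSPBA_to_epsWPBA {Sig : Type} {d : ℕ} (A : EpsPBA Sig d)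
    (hA : IsSemilinear A.C) :
    ∃ A' : EpsPBA Sig (d + 1), IsSemilinear A'.C ∧
      Fintype.card A'.Q = Fintype.card A.Q ∧ A'.WeakLang = A.StrongLang := by
  classical
  refine ⟨{ Q := A.Q, fin := A.fin, q0 := A.q0,
            Δ := {t | (t.1, t.2.1, (fun i => t.2.2.1 i.castSucc), t.2.2.2) ∈ A.Δ ∧
              t.2.2.1 (Fin.last d) = if t.2.2.2 ∈ A.F then 1 else 0},
            E := {t | (t.1, (fun i => t.2.1 i.castSucc), t.2.2) ∈ A.E ∧
              t.2.1 (Fin.last d) = if t.2.2 ∈ A.F then 1 else 0},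
            F := A.F,
            C := {w | (fun i => w i.castSucc) ∈ A.C ∧ w (Fin.last d) = 1} },
    ?_, rfl, ?_⟩
  · -- semilinearity of the new constraint set
    obtain ⟨n, T, hT, hC⟩ := hA
    refine ⟨n, fun i => {w | (fun j => w j.castSucc) ∈ T i ∧ w (Fin.last d) = 1},
      ?_, ?_⟩
    · intro i
      obtain ⟨b₀, ℓ, b, hb⟩ := hT i
      refine ⟨Fin.snoc b₀ 1, ℓ, fun j => Fin.snoc (b j) 0, ?_⟩
      ext w
      simp only [Set.mem_setOf_eq, hb]
      constructor
      · rintro ⟨⟨z, hz⟩, hlast⟩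
        refine ⟨z, ?_⟩
        funext i
        refine Fin.lastCases ?_ ?_ i
        · simp [hlast, Finset.sum_apply]
        · intro i
          have := congrFun hz i
          simp only [Pi.add_apply, Finset.sum_apply, Pi.smul_apply, smul_eq_mul] at this ⊢
          simpa using this
      · rintro ⟨z, hz⟩
        refine ⟨⟨z, ?_⟩, ?_⟩
        · funext i
          have := congrFun hz i.castSucc
          simp only [Pi.add_apply, Finset.sum_apply, Pi.smul_apply, smul_eq_mul] at this ⊢
          simpa using this
        · have := congrFun hz (Fin.last d)
          simpa [Finset.sum_apply] using this
    · rw [hC]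
      ext w
      simp only [Set.mem_setOf_eq, Set.mem_iUnion]
      tauto
  · -- language equality
    ext α
    constructor
    · -- Weak(A') → Strong(A)
      rintro ⟨p, v', reads, ⟨hp0, hinf, hstep⟩, k, hk0, hks, hkacc⟩
      have hlast : ∀ i, v' i (Fin.last d) = if p (i + 1) ∈ A.F then 1 else 0 := by
        intro i
        have h := hstep i
        by_cases hr : reads i = true <;> simp [hr] at h <;> exact h.2
      have hsumlast : ∀ a b : ℕ, (∑ m ∈ Finset.Ico a b, v' m) (Fin.last d) =
          ((Finset.Ico a b).filter (fun m => p (m + 1) ∈ A.F)).card := by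
        intro a b
        rw [Finset.sum_apply]
        rw [Finset.sum_congr rfl (fun m _ => hlast m)]
        simp [Finset.sum_boole]
      have hfront : ∀ a b : ℕ,
          (∑ m ∈ Finset.Ico a b, (fun j : Fin d => v' m j.castSucc)) =
          fun j : Fin d => (∑ m ∈ Finset.Ico a b, v' m) j.castSucc := by
        intro a b; funext j; simp [Finset.sum_apply]
      refine ⟨p, fun i j => v' i j.castSucc, reads, ⟨hp0, hinf, ?_⟩, ?_⟩
      · intro i
        have h := hstep i
        by_cases hr : reads i = true <;> simp [hr] at h ⊢ <;> exact h.1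
      · -- strong condition
        have hone : ∀ i : ℕ,
            ((Finset.Ico (k i) (k (i + 1))).filter (fun m => p (m + 1) ∈ A.F)).card = 1 := by
          intro i
          have := (hkacc i).2.2
          rw [hsumlast] at this
          exact this
        refine ⟨k, hk0, hks, ?_, ?_⟩
        · intro n hn
          constructor
          · intro hpn
            obtain ⟨i, hlt, hle⟩ := exists_interval_aux hk0 hks hn
            obtain ⟨a, ha⟩ := Finset.card_eq_one.mp (hone i)
            have h1 : n - 1 ∈ (Finset.Ico (k i) (k (i + 1))).filter
                (fun m => p (m + 1) ∈ A.F) := by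
              rw [Finset.mem_filter, Finset.mem_Ico]
              have : n - 1 + 1 = n := by omega
              rw [this]
              exact ⟨⟨by omega, by omega⟩, hpn⟩
            have h2 : k (i + 1) - 1 ∈ (Finset.Ico (k i) (k (i + 1))).filter
                (fun m => p (m + 1) ∈ A.F) := by
              rw [Finset.mem_filter, Finset.mem_Ico]
              have hki : k i < k (i + 1) := hks (by omega)
              have h1k : 1 ≤ k (i + 1) := by omega
              have : k (i + 1) - 1 + 1 = k (i + 1) := by omega
              rw [this]
              exact ⟨⟨by omega, by omega⟩, (hkacc i).1⟩
            rw [ha, Finset.mem_singleton] at h1 h2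
            refine ⟨i + 1, by omega, ?_⟩
            omega
          · rintro ⟨i, hi1, rfl⟩
            obtain ⟨j, rfl⟩ : ∃ j, i = j + 1 := ⟨i - 1, by omega⟩
            exact (hkacc j).1
        · intro i
          have := (hkacc i).2.1
          rw [hfront]
          exact this
    · -- Strong(A) → Weak(A')
      rintro ⟨p, v, reads, ⟨hp0, hinf, hstep⟩, k, hk0, hks, hkF, hkC⟩
      set ind : ℕ → ℕ := fun i => if p (i + 1) ∈ A.F then 1 else 0 with hind
      refine ⟨p, fun i => Fin.snoc (v i) (ind i), reads, ⟨hp0, hinf, ?_⟩, ?_⟩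
      · intro i
        have h := hstep i
        have hfr : (fun j : Fin d => (Fin.snoc (v i) (ind i) : Fin (d + 1) → ℕ) j.castSucc)
            = v i := by funext j; simp
        by_cases hr : reads i = true
        · rw [if_pos hr] at h ⊢
          exact ⟨by rw [hfr]; exact h, by simp [hind]⟩
        · rw [if_neg hr] at h ⊢
          exact ⟨by rw [hfr]; exact h, by simp [hind]⟩
      · -- weak condition
        refine ⟨k, hk0, hks, ?_⟩
        intro i
        have hki : k i < k (i + 1) := hks (by omega)
        have hk1 : 1 ≤ k (i + 1) := by
          have : k 0 < k (i + 1) := hks (by omega)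
          omega
        have hpF : p (k (i + 1)) ∈ A.F :=
          (hkF (k (i + 1)) hk1).mpr ⟨i + 1, by omega, rfl⟩
        refine ⟨hpF, ?_, ?_⟩
        · -- first d components
          have : (fun j : Fin d =>
              (∑ m ∈ Finset.Ico (k i) (k (i + 1)), Fin.snoc (v m) (ind m)
                : Fin (d + 1) → ℕ) j.castSucc)
              = ∑ m ∈ Finset.Ico (k i) (k (i + 1)), v m := by
            funext j; simp [Finset.sum_apply]
          rw [this]
          exact hkC i
        · -- last component equals 1
          have hsum : (∑ m ∈ Finset.Ico (k i) (k (i + 1)), Fin.snoc (v m) (ind m)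
              : Fin (d + 1) → ℕ) (Fin.last d) =
              ((Finset.Ico (k i) (k (i + 1))).filter (fun m => p (m + 1) ∈ A.F)).card := by
            rw [Finset.sum_apply]
            simp only [Fin.snoc_last, hind]
            simp [Finset.sum_boole]
          rw [hsum]
          have hfil : (Finset.Ico (k i) (k (i + 1))).filter (fun m => p (m + 1) ∈ A.F)
              = {k (i + 1) - 1} := by
            ext m
            rw [Finset.mem_filter, Finset.mem_Ico, Finset.mem_singleton]
            constructor
            · rintro ⟨⟨hm1, hm2⟩, hmF⟩
              obtain ⟨j, hj1, hjm⟩ := (hkF (m + 1) (by omega)).mp hmF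
              have hgt : k i < k j := by omega
              have hle : k j ≤ k (i + 1) := by omega
              have hji : i < j := hks.lt_iff_lt.mp hgt
              have hji2 : j ≤ i + 1 := by
                by_contra hc
                push_neg at hc
                exact absurd (hks hc) (by omega)
              have hji3 : j = i + 1 := by omega
              rw [hji3] at hjm
              omega
            · rintro rfl
              have heq : k (i + 1) - 1 + 1 = k (i + 1) := by omega
              rw [heq]
              exact ⟨⟨by omega, by omega⟩, hpF⟩
          rw [hfil]
          simp
end

section
/- Every ε-WPBA is equivalent to an ε-SPBA with at most twice the number of states and the same number of counters; hence the classes of ω-languages recognized by PBA with weak and with strong reset-acceptance coincide. -/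
/-! A weak-acceptance witness `0 = k 0 < k 1 < ⋯` is only required to stop at accepting
states, whereas strong acceptance must stop at *every* visit to an accepting state. Pairing each
state with a bit that the automaton guesses nondeterministically, and accepting only in states
whose bit is set, lets a run announce its reset positions `k 1, k 2, …`: these become exactly
the visits to accepting states, so the strong condition of the flagged run is the weak condition
of the original one. Forgetting the bit turns a strong witness back into a weak one. -/

section ResetConditions

variable {Q Q' : Type} {d : ℕ} {F : Set Q} {C : Q → Set (Fin d → ℕ)} {p : ℕ → Q}
  {v : ℕ → Fin d → ℕ}

theorem StrongCond.weakCond (h : StrongCond F C p v) : WeakCond F C p v := by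
  obtain ⟨k, hk0, hk, hF, hC⟩ := h
  refine ⟨k, hk0, hk, fun i => ⟨?_, hC i⟩⟩
  have hpos : 0 < k (i + 1) := hk0 ▸ hk i.succ_pos
  exact (hF _ hpos).2 ⟨i + 1, i.succ_pos, rfl⟩

theorem WeakCond.map {F' : Set Q'} {C' : Q' → Set (Fin d → ℕ)} (f : Q → Q')
    (hF : Set.MapsTo f F F') (hC : ∀ q, C q ⊆ C' (f q)) (h : WeakCond F C p v) :
    WeakCond F' C' (f ∘ p) v := by
  obtain ⟨k, hk0, hk, hres⟩ := h
  exact ⟨k, hk0, hk, fun i => ⟨hF (hres i).1, hC _ (hres i).2⟩⟩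

theorem WeakCond.exists_strongCond_flag (h : WeakCond F C p v) :
    ∃ b : ℕ → Bool, b 0 = false ∧
      StrongCond {q : Q × Bool | q.1 ∈ F ∧ q.2 = true} (fun q => C q.1)
        (fun n => (p n, b n)) v := by
  classical
  obtain ⟨k, hk0, hk, hres⟩ := h
  have hpos (i : ℕ) : 0 < k (i + 1) := hk0 ▸ hk i.succ_pos
  refine ⟨fun n => decide (∃ i, k (i + 1) = n), ?_, k, hk0, hk, fun n _ => ?_,
    fun i => (hres i).2⟩
  · simpa using fun i => (hpos i).ne'
  · simp only [Set.mem_ofPred_eq, decide_eq_true_eq]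
    constructor
    · rintro ⟨-, i, rfl⟩
      exact ⟨i + 1, i.succ_pos, rfl⟩
    · rintro ⟨_ | i, hi, rfl⟩
      · cases hi
      · exact ⟨(hres i).1, i, rfl⟩

end ResetConditions

namespace EpsPBA

variable {Sig : Type} {d : ℕ}

def withResetFlag (A : EpsPBA Sig d) : EpsPBA Sig d where
  Q := A.Q × Bool
  fin := inferInstance
  q0 := (A.q0, false)
  Δ := {t | (t.1.1, t.2.1, t.2.2.1, t.2.2.2.1) ∈ A.Δ}
  E := {t | (t.1.1, t.2.1, t.2.2.1) ∈ A.E}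
  F := {q | q.1 ∈ A.F ∧ q.2 = true}
  C := A.C

theorem card_withResetFlag (A : EpsPBA Sig d) :
    Fintype.card A.withResetFlag.Q = 2 * Fintype.card A.Q :=
  (Fintype.card_prod A.Q Bool).trans (mul_comm _ _)

theorem isEpsRun_withResetFlag_iff (A : EpsPBA Sig d) {α : ℕ → Sig} {p : ℕ → A.Q × Bool}
    {v : ℕ → Fin d → ℕ} {reads : ℕ → Bool} :
    IsEpsRun A.withResetFlag.q0 A.withResetFlag.Δ A.withResetFlag.E α p v reads ↔
      IsEpsRun A.q0 A.Δ A.E α (Prod.fst ∘ p) v reads ∧ (p 0).2 = false := by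
  simp only [IsEpsRun, withResetFlag, Prod.ext_iff]
  tauto

end EpsPBA

/-- Every ε-WPBA is equivalent to an ε-SPBA with at most twice the number of states
and the same number of counters. -/
theorem epsWPBA_to_epsSPBA {Sig : Type} {d : ℕ} (A : EpsPBA Sig d)
    (hA : IsSemilinear A.C) :
    ∃ A' : EpsPBA Sig d, IsSemilinear A'.C ∧
      Fintype.card A'.Q ≤ 2 * Fintype.card A.Q ∧ A'.StrongLang = A.WeakLang := by
  refine ⟨A.withResetFlag, hA, A.card_withResetFlag.le, Set.ext fun α => ⟨?_, ?_⟩⟩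
  · rintro ⟨p, v, reads, hrun, hstrong⟩
    exact ⟨Prod.fst ∘ p, v, reads, (A.isEpsRun_withResetFlag_iff.1 hrun).1,
      hstrong.weakCond.map Prod.fst (fun _ hq => hq.1) fun _ => subset_rfl⟩
  · rintro ⟨p, v, reads, hrun, hweak⟩
    obtain ⟨b, hb0, hstrong⟩ := hweak.exists_strongCond_flag
    exact ⟨fun n => (p n, b n), v, reads, A.isEpsRun_withResetFlag_iff.2 ⟨hrun, hb0⟩, hstrong⟩
end

section
/- For every Multi-PPBA (a PPBA where each accepting state q has its own semi-linear set C(q)) there exists an equivalent PPBA with a single accepting state recognizing the same ω-language. -/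
-- AUX START
section Aux
variable {d m : ℕ}
def pr1 (V : Fin (d + m) → ℕ) : Fin d → ℕ := fun i => V (Fin.castAdd m i)
def pr2 (V : Fin (d + m) → ℕ) : Fin m → ℕ := fun j => V (Fin.natAdd d j)
@[simp] lemma pr1_append (u : Fin d → ℕ) (c : Fin m → ℕ) : pr1 (Fin.append u c) = u := by
  funext i; simp [pr1]
@[simp] lemma pr2_append (u : Fin d → ℕ) (c : Fin m → ℕ) : pr2 (Fin.append u c) = c := by
  funext j; simp [pr2]
lemma vec_eq_iff (V W : Fin (d + m) → ℕ) : V = W ↔ pr1 V = pr1 W ∧ pr2 V = pr2 W := by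
  constructor
  · rintro rfl; exact ⟨rfl, rfl⟩
  · rintro ⟨h1, h2⟩
    funext x
    refine Fin.addCases (fun i => ?_) (fun j => ?_) x
    · exact congrFun h1 i
    · exact congrFun h2 j
@[simp] lemma pr1_add (V W : Fin (d + m) → ℕ) : pr1 (V + W) = pr1 V + pr1 W := rfl
@[simp] lemma pr2_add (V W : Fin (d + m) → ℕ) : pr2 (V + W) = pr2 V + pr2 W := rfl
@[simp] lemma pr1_smul (k : ℕ) (V : Fin (d + m) → ℕ) : pr1 (k • V) = k • pr1 V := rfl
@[simp] lemma pr2_smul (k : ℕ) (V : Fin (d + m) → ℕ) : pr2 (k • V) = k • pr2 V := rfl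
@[simp] lemma pr1_zero : pr1 (0 : Fin (d + m) → ℕ) = 0 := rfl
@[simp] lemma pr2_zero : pr2 (0 : Fin (d + m) → ℕ) = 0 := rfl
lemma pr1_sum {ι : Type*} (s : Finset ι) (f : ι → Fin (d + m) → ℕ) :
    pr1 (∑ j ∈ s, f j) = ∑ j ∈ s, pr1 (f j) := by
  funext i; simp [pr1, Finset.sum_apply]
lemma pr2_sum {ι : Type*} (s : Finset ι) (f : ι → Fin (d + m) → ℕ) :
    pr2 (∑ j ∈ s, f j) = ∑ j ∈ s, pr2 (f j) := by
  funext i; simp [pr2, Finset.sum_apply]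

lemma isLinear_isSemilinear {S : Set (Fin d → ℕ)} (h : IsLinear S) : IsSemilinear S :=
  ⟨1, fun _ => S, fun _ => h, by rw [Set.iUnion_const]⟩

lemma isSemilinear_iUnion {ι : Type*} [Fintype ι] (T : ι → Set (Fin d → ℕ))
    (h : ∀ i, IsSemilinear (T i)) : IsSemilinear (⋃ i, T i) := by
  choose n U hU hEq using h
  classical
  let e := Fintype.equivFin (Σ i : ι, Fin (n i))
  refine ⟨Fintype.card (Σ i : ι, Fin (n i)), fun j => U (e.symm j).1 (e.symm j).2,
    fun j => hU _ _, ?_⟩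
  ext x
  simp only [Set.mem_iUnion]
  constructor
  · rintro ⟨i, hi⟩
    rw [hEq i] at hi
    simp only [Set.mem_iUnion] at hi
    obtain ⟨k, hk⟩ := hi
    refine ⟨e ⟨i, k⟩, ?_⟩
    rw [Equiv.symm_apply_apply]
    exact hk
  · rintro ⟨j, hj⟩
    refine ⟨(e.symm j).1, ?_⟩
    rw [hEq]
    exact Set.mem_iUnion.2 ⟨(e.symm j).2, hj⟩

lemma isLinear_sect {L : Set (Fin d → ℕ)} (hL : IsLinear L) (w : Fin m → ℕ) :
    IsLinear {V : Fin (d + m) → ℕ | pr1 V ∈ L ∧ ∃ k, pr2 V = (k + 1) • w} := by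
  obtain ⟨b₀, ℓ, b, rfl⟩ := hL
  refine ⟨Fin.append b₀ w, ℓ + 1,
    Fin.cons (Fin.append 0 w) (fun i => Fin.append (b i) 0), ?_⟩
  ext V
  simp only [Set.mem_setOf_eq]
  constructor
  · rintro ⟨⟨z₀, hz₀⟩, k, hk⟩
    refine ⟨Fin.cons k z₀, ?_⟩
    rw [vec_eq_iff]
    constructor
    · rw [pr1_add, pr1_sum, pr1_append]
      rw [Fin.sum_univ_succ]
      simp only [Fin.cons_zero, Fin.cons_succ, pr1_smul, pr1_append, smul_zero]
      rw [zero_add]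
      exact hz₀
    · rw [pr2_add, pr2_sum, pr2_append]
      rw [Fin.sum_univ_succ]
      simp only [Fin.cons_zero, Fin.cons_succ, pr2_smul, pr2_append, smul_zero]
      rw [hk]
      rw [Finset.sum_const_zero, add_zero, succ_nsmul, add_comm (k • w) w]
  · rintro ⟨z, rfl⟩
    constructor
    · refine ⟨fun i => z i.succ, ?_⟩
      rw [pr1_add, pr1_sum, pr1_append, Fin.sum_univ_succ]
      simp only [Fin.cons_zero, Fin.cons_succ, pr1_smul, pr1_append, smul_zero, zero_add]
    · refine ⟨z 0, ?_⟩
      rw [pr2_add, pr2_sum, pr2_append, Fin.sum_univ_succ]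
      simp only [Fin.cons_zero, Fin.cons_succ, pr2_smul, pr2_append, smul_zero,
        Finset.sum_const_zero, add_zero]
      rw [succ_nsmul, add_comm (z 0 • w) w]

lemma isSemilinear_sect {S : Set (Fin d → ℕ)} (hS : IsSemilinear S) (w : Fin m → ℕ) :
    IsSemilinear {V : Fin (d + m) → ℕ | pr1 V ∈ S ∧ ∃ k, pr2 V = (k + 1) • w} := by
  obtain ⟨n, T, hT, rfl⟩ := hS
  have : {V : Fin (d + m) → ℕ | pr1 V ∈ ⋃ i, T i ∧ ∃ k, pr2 V = (k + 1) • w}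
      = ⋃ i, {V : Fin (d + m) → ℕ | pr1 V ∈ T i ∧ ∃ k, pr2 V = (k + 1) • w} := by
    ext V
    simp only [Set.mem_setOf_eq, Set.mem_iUnion]
    tauto
  rw [this]
  exact isSemilinear_iUnion _ fun i => isLinear_isSemilinear (isLinear_sect (hT i) w)

end Aux

namespace MPPBAProof
variable {Sig : Type} {d : ℕ}

noncomputable instance instFFin (A : MPBA Sig d) : Fintype ↥A.F :=
  (Set.toFinite A.F).fintype

noncomputable def mm (A : MPBA Sig d) : ℕ := Fintype.card ↥A.F
noncomputable def fe (A : MPBA Sig d) : ↥A.F ≃ Fin (mm A) := Fintype.equivFin _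

noncomputable def uv (A : MPBA Sig d) (t : ↥A.F) : Fin (mm A) → ℕ :=
  fun j => if j = fe A t then 1 else 0

lemma uv_self (A : MPBA Sig d) (t : ↥A.F) : uv A t (fe A t) = 1 := by simp [uv]

lemma uv_inj (A : MPBA Sig d) {t t' : ↥A.F} (h : uv A t (fe A t') ≠ 0) : t = t' := by
  by_contra hne
  apply h
  have : fe A t' ≠ fe A t := fun hh => hne ((fe A).injective hh.symm)
  simp [uv, this]

abbrev Q' (A : MPBA Sig d) := (A.Q × ↥A.F) ⊕ Bool

def step (A : MPBA Sig d) (t : ↥A.F) (p₀ : A.Q) (a : Sig)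
    (V : Fin (d + mm A) → ℕ) (y : Q' A) : Prop :=
  ∃ q v, (p₀, a, v, q) ∈ A.Δ ∧
    ((y = Sum.inl (q, t) ∧ V = Fin.append v 0) ∨
     (y = Sum.inr true ∧ q = ↑t ∧ V = Fin.append v (uv A t)))

def Δ' (A : MPBA Sig d) : Set (Q' A × Sig × (Fin (d + mm A) → ℕ) × Q' A) :=
  {z | match z with
    | (Sum.inl (p, t), a, V, y) => step A t p a V y
    | (Sum.inr false, a, V, y) => ∃ t, step A t A.q0 a V y
    | (Sum.inr true, a, V, y) => ∃ t, step A t ↑t a V y}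

def C' (A : MPBA Sig d) : Set (Fin (d + mm A) → ℕ) :=
  {V | ∃ t : ↥A.F, pr1 V ∈ A.C ↑t ∧ ∃ k, pr2 V = (k + 1) • uv A t}

noncomputable def AB (A : MPBA Sig d) : PBA Sig (d + mm A) :=
  ⟨Q' A, inferInstance, Sum.inr false, Δ' A, {Sum.inr true}, C' A⟩

lemma C'_semilinear (A : MPBA Sig d) (hA : ∀ q, IsSemilinear (A.C q)) :
    IsSemilinear (C' A) := by
  have : C' A = ⋃ t : ↥A.F,
      {V : Fin (d + mm A) → ℕ | pr1 V ∈ A.C ↑t ∧ ∃ k, pr2 V = (k + 1) • uv A t} := by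
    ext V
    simp only [C', Set.mem_setOf_eq, Set.mem_iUnion]
  rw [this]
  exact isSemilinear_iUnion _ fun t => isSemilinear_sect (hA ↑t) (uv A t)

end MPPBAProof


open MPPBAProof

/-- For every Multi-PPBA there is an equivalent PPBA with a single accepting state. -/
theorem MPPBA_to_PPBA {Sig : Type} {d : ℕ} (A : MPBA Sig d)
    (hA : ∀ q, IsSemilinear (A.C q)) :
    ∃ d', ∃ A' : PBA Sig d', IsSemilinear A'.C ∧ (∃ f : A'.Q, A'.F = {f}) ∧
      A'.PrefixLang = A.PrefixLang := by
  classical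
  refine ⟨d + mm A, AB A, C'_semilinear A hA, ⟨Sum.inr true, rfl⟩, ?_⟩
  ext α
  constructor
  · -- soundness
    rintro ⟨p', v', ⟨hp0, hstep⟩, hpc⟩
    have hp0' : p' 0 = Sum.inr false := hp0
    have hpc' : ∀ N, ∃ n, N ≤ n ∧ 1 ≤ n ∧ p' n = Sum.inr true ∧
        (∑ j ∈ Finset.range n, v' j) ∈ C' A := by
      intro N
      obtain ⟨n, h1, h2, h3, h4⟩ := hpc N
      exact ⟨n, h1, h2, h3, h4⟩
    have hstep2 : ∀ i, ∃ (tt : ↥A.F) (src : A.Q), step A tt src (α i) (v' i) (p' (i + 1)) ∧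
        ((∃ q, p' i = Sum.inl (q, tt) ∧ src = q) ∨ (p' i = Sum.inr false ∧ src = A.q0) ∨
          (p' i = Sum.inr true ∧ src = ↑tt)) := by
      intro i
      have h := hstep i
      rcases hh : p' i with ⟨q, tt⟩ | b
      · rw [hh] at h
        exact ⟨tt, q, h, Or.inl ⟨q, rfl, rfl⟩⟩
      · cases b
        · rw [hh] at h
          obtain ⟨tt, htt⟩ := h
          exact ⟨tt, A.q0, htt, Or.inr (Or.inl ⟨rfl, rfl⟩)⟩
        · rw [hh] at h
          obtain ⟨tt, htt⟩ := h
          exact ⟨tt, ↑tt, htt, Or.inr (Or.inr ⟨rfl, rfl⟩)⟩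
    choose T SRC hSTEP hCASE using hstep2
    choose QQ W hedge hbr using hSTEP
    have hpr1 : ∀ i, pr1 (v' i) = W i := by
      intro i
      rcases hbr i with ⟨-, hv⟩ | ⟨-, -, hv⟩ <;> rw [hv] <;> simp
    have evalS : ∀ n (x : Fin (mm A)), pr2 (∑ j ∈ Finset.range n, v' j) x =
        ∑ j ∈ Finset.range n, pr2 (v' j) x := by
      intro n x
      rw [pr2_sum, Finset.sum_apply]
    have comp : ∀ a b (ta tb : ↥A.F) (ka kb : ℕ), a ≤ b →
        pr2 (∑ j ∈ Finset.range a, v' j) = (ka + 1) • uv A ta →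
        pr2 (∑ j ∈ Finset.range b, v' j) = (kb + 1) • uv A tb → ta = tb := by
      intro a b ta tb ka kb hab ha hb
      by_contra hne
      have ea : ∑ j ∈ Finset.range a, pr2 (v' j) (fe A ta) = ka + 1 := by
        rw [← evalS a (fe A ta), ha]
        simp [Pi.smul_apply, smul_eq_mul, uv_self]
      have hz : uv A tb (fe A ta) = 0 := by
        by_contra h0
        exact hne (uv_inj A h0).symm
      have eb : ∑ j ∈ Finset.range b, pr2 (v' j) (fe A ta) = 0 := by
        rw [← evalS b (fe A ta), hb]
        simp [Pi.smul_apply, smul_eq_mul, hz]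
      have hmono : ∑ j ∈ Finset.range a, pr2 (v' j) (fe A ta) ≤
          ∑ j ∈ Finset.range b, pr2 (v' j) (fe A ta) :=
        Finset.sum_le_sum_of_subset (Finset.range_subset_range.mpr hab)
      omega
    obtain ⟨n₀, -, hn₀1, hn₀f, hn₀C⟩ := hpc' 0
    obtain ⟨t0, ht0C, k0, ht0R⟩ := hn₀C
    have allGood : ∀ n, (∑ j ∈ Finset.range n, v' j) ∈ C' A →
        pr1 (∑ j ∈ Finset.range n, v' j) ∈ A.C ↑t0 ∧
          ∃ k, pr2 (∑ j ∈ Finset.range n, v' j) = (k + 1) • uv A t0 := by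
      intro n hn
      obtain ⟨tn, h1, k, h2⟩ := hn
      have htn : tn = t0 := by
        rcases le_total n n₀ with h | h
        · exact comp n n₀ tn t0 k k0 h h2 ht0R
        · exact (comp n₀ n t0 tn k0 k h ht0R h2).symm
      rw [htn] at h1 h2
      exact ⟨h1, k, h2⟩
    have claimT : ∀ j, pr2 (v' j) = uv A (T j) → T j = t0 := by
      intro j hj
      obtain ⟨n, hn, hn1, hnf, hnC⟩ := hpc' (j + 1)
      obtain ⟨-, k, hk⟩ := allGood n hnC
      by_contra hne
      have h1 : 1 ≤ ∑ i ∈ Finset.range n, pr2 (v' i) (fe A (T j)) := by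
        have hj' : pr2 (v' j) (fe A (T j)) = 1 := by
          rw [hj]
          exact uv_self A (T j)
        calc 1 = pr2 (v' j) (fe A (T j)) := hj'.symm
          _ ≤ _ := Finset.single_le_sum (f := fun i => pr2 (v' i) (fe A (T j)))
              (fun i _ => Nat.zero_le _) (Finset.mem_range.mpr (by omega))
      have hz : uv A t0 (fe A (T j)) = 0 := by
        by_contra h0
        exact hne (uv_inj A h0).symm
      rw [← evalS n (fe A (T j)), hk] at h1
      simp [Pi.smul_apply, smul_eq_mul, hz] at h1
    have hcomp : ∀ k j q (tt : ↥A.F), p' j = Sum.inl (q, tt) →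
        p' (j + k) = Sum.inr true → tt = t0 := by
      intro k
      induction k with
      | zero =>
        intro j q tt h1 h2
        rw [Nat.add_zero, h1] at h2
        simp at h2
      | succ k ih =>
        intro j q tt h1 h2
        rcases hCASE j with ⟨q', hq', -⟩ | ⟨hq', -⟩ | ⟨hq', -⟩
        · rw [h1] at hq'
          have h4 : tt = T j := congrArg Prod.snd (Sum.inl.inj hq')
          rcases hbr j with ⟨hy, -⟩ | ⟨hy, -, hv⟩
          · have := ih (j + 1) (QQ j) (T j) hy
              (by rw [show j + 1 + k = j + (k + 1) by omega]; exact h2)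
            exact h4.trans this
          · exact h4.trans (claimT j (by rw [hv]; simp))
        · rw [h1] at hq'
          simp at hq'
        · rw [h1] at hq'
          simp at hq'
    refine ⟨fun n => Sum.elim Prod.fst (fun b => if b then (↑t0 : A.Q) else A.q0) (p' n),
      W, ⟨?_, ?_⟩, ?_⟩
    · show Sum.elim Prod.fst (fun b => if b then (↑t0 : A.Q) else A.q0) (p' 0) = A.q0
      rw [hp0']
      simp
    · intro i
      have e2 : Sum.elim Prod.fst (fun b => if b then (↑t0 : A.Q) else A.q0) (p' (i + 1))
          = QQ i := by
        rcases hbr i with ⟨hy, -⟩ | ⟨hy, hq, hv⟩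
        · rw [hy]; simp
        · have hT : T i = t0 := claimT i (by rw [hv]; simp)
          rw [hy, hq, hT]
          simp
      have e1 : Sum.elim Prod.fst (fun b => if b then (↑t0 : A.Q) else A.q0) (p' i)
          = SRC i := by
        rcases hCASE i with ⟨q, hq, hsrc⟩ | ⟨hq, hsrc⟩ | ⟨hq, hsrc⟩
        · rw [hq, hsrc]; simp
        · rw [hq, hsrc]; simp
        · have hT : T i = t0 := by
            rcases hbr i with ⟨hy, -⟩ | ⟨hy, -, hv⟩
            · obtain ⟨n, hn, -, hnf, -⟩ := hpc' (i + 2)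
              exact hcomp (n - (i + 1)) (i + 1) (QQ i) (T i) hy
                (by rw [show i + 1 + (n - (i + 1)) = n by omega]; exact hnf)
            · exact claimT i (by rw [hv]; simp)
          rw [hq, hsrc, hT]
          simp
      show (Sum.elim Prod.fst (fun b => if b then (↑t0 : A.Q) else A.q0) (p' i), α i, W i,
        Sum.elim Prod.fst (fun b => if b then (↑t0 : A.Q) else A.q0) (p' (i + 1))) ∈ A.Δ
      rw [e1, e2]
      exact hedge i
    · intro N
      obtain ⟨n, hn, hn1, hnf, hnC⟩ := hpc' N
      have hpn : Sum.elim Prod.fst (fun b => if b then (↑t0 : A.Q) else A.q0) (p' n)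
          = ↑t0 := by
        rw [hnf]; simp
      refine ⟨n, hn, hn1, ?_, ?_⟩
      · show Sum.elim Prod.fst (fun b => if b then (↑t0 : A.Q) else A.q0) (p' n) ∈ A.F
        rw [hpn]
        exact t0.2
      · show _ ∈ A.C (Sum.elim Prod.fst (fun b => if b then (↑t0 : A.Q) else A.q0) (p' n))
        have hs : ∑ j ∈ Finset.range n, W j = pr1 (∑ j ∈ Finset.range n, v' j) := by
          rw [pr1_sum]
          exact Finset.sum_congr rfl fun j _ => (hpr1 j).symm
        rw [hpn, hs]
        exact (allGood n hnC).1
  · -- completeness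
    rintro ⟨p, v, ⟨hp0, hstep⟩, hpc⟩
    have pig : ∃ t : ↥A.F, ∀ N, ∃ n, N ≤ n ∧ 1 ≤ n ∧ p n = ↑t ∧
        (∑ j ∈ Finset.range n, v j) ∈ A.C ↑t := by
      by_contra hcon
      push_neg at hcon
      choose Nf hNf using hcon
      obtain ⟨n, hn1, hn2, hn3, hn4⟩ := hpc (Finset.univ.sup Nf)
      exact hNf ⟨p n, hn3⟩ n (le_trans (Finset.le_sup (Finset.mem_univ _)) hn1) hn2 rfl hn4
    obtain ⟨t, ht⟩ := pig
    set p' : ℕ → Q' A := fun n =>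
      if n = 0 then Sum.inr false else
        if p n = ↑t then Sum.inr true else Sum.inl (p n, t) with hp'
    set v' : ℕ → Fin (d + mm A) → ℕ := fun n =>
      Fin.append (v n) (if p (n + 1) = ↑t then uv A t else 0) with hv'
    have hstep' : ∀ i, step A t (p i) (α i) (v' i) (p' (i + 1)) := by
      intro i
      by_cases h : p (i + 1) = ↑t
      · exact ⟨p (i + 1), v i, hstep i,
          Or.inr ⟨by simp [hp', h], h, by simp [hv', h]⟩⟩
      · exact ⟨p (i + 1), v i, hstep i,
          Or.inl ⟨by simp [hp', h], by simp [hv', h]⟩⟩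
    refine ⟨p', v', ⟨by simp [hp', AB], ?_⟩, ?_⟩
    · intro i
      rcases Nat.eq_zero_or_pos i with rfl | hi
      · have h0 : p' 0 = Sum.inr false := by simp [hp']
        rw [h0]
        exact ⟨t, hp0 ▸ hstep' 0⟩
      · by_cases h : p i = ↑t
        · have h1 : p' i = Sum.inr true := by simp [hp', Nat.pos_iff_ne_zero.mp hi, h]
          rw [h1]
          exact ⟨t, h ▸ hstep' i⟩
        · have h1 : p' i = Sum.inl (p i, t) := by simp [hp', Nat.pos_iff_ne_zero.mp hi, h]
          rw [h1]
          exact hstep' i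
    · intro N
      obtain ⟨n, hn1, hn2, hn3, hn4⟩ := ht N
      refine ⟨n, hn1, hn2, ?_, ?_⟩
      · show p' n ∈ ({Sum.inr true} : Set (Q' A))
        simp [hp', Nat.pos_iff_ne_zero.mp hn2, hn3]
      · show (∑ j ∈ Finset.range n, v' j) ∈ C' A
        have h1 : pr1 (∑ j ∈ Finset.range n, v' j) = ∑ j ∈ Finset.range n, v j := by
          rw [pr1_sum]
          exact Finset.sum_congr rfl fun j _ => by simp [hv']
        have h2 : pr2 (∑ j ∈ Finset.range n, v' j) =
            ((Finset.range n).filter (fun j => p (j + 1) = ↑t)).card • uv A t := by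
          rw [pr2_sum]
          have e1 : ∀ j ∈ Finset.range n, pr2 (v' j) =
              if p (j + 1) = ↑t then uv A t else 0 := fun j _ => by
            by_cases h : p (j + 1) = ↑t <;> simp [hv', h]
          rw [Finset.sum_congr rfl e1, ← Finset.sum_filter, Finset.sum_const]
        have hcard : 1 ≤ ((Finset.range n).filter (fun j => p (j + 1) = ↑t)).card := by
          refine Finset.card_pos.mpr ⟨n - 1, ?_⟩
          rw [Finset.mem_filter, Finset.mem_range]
          constructor
          · omega
          · have : n - 1 + 1 = n := by omega
            rw [this]
            exact hn3
        refine ⟨t, by rw [h1]; exact hn4,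
          ((Finset.range n).filter (fun j => p (j + 1) = ↑t)).card - 1, ?_⟩
        rw [h2]
        congr 1
        omega
end

section
/- If L₁ ⊆ Σ* is Parikh-recognizable and L₂ ⊆ Σ^ω is PPBA-recognizable, then L₁L₂ is PPBA-recognizable. -/
/-! The concatenation automaton runs `A₁` on a prefix and then `A₂` on the rest, in dimension
`d₁ + d₂`: the first block of coordinates counts the `A₁`-part, the second the `A₂`-part. Its
accepting states are those of `A₂` and its semilinear set is `C₁ × C₂`; since the first block is
frozen after the switch, any accepting position certifies both that the prefix lies in `L₁` and an
accepting position of `A₂` on the suffix. The switch is taken while reading the first letter of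
the suffix, from an accepting state of `A₁`, so the empty prefix needs no special initial state. -/

open Set Pointwise

theorem setOf_eq_vadd_closure_range {M ι : Type*} [AddCommMonoid M] [Fintype ι] (b₀ : M)
    (b : ι → M) :
    {v | ∃ z : ι → ℕ, v = b₀ + ∑ i, z i • b i} = b₀ +ᵥ (AddSubmonoid.closure (range b) : Set M) := by
  ext v
  simp only [mem_ofPred_eq, mem_vadd_set, SetLike.mem_coe,
    AddSubmonoid.mem_closure_range_iff_of_fintype, vadd_eq_add]
  constructor
  · rintro ⟨z, rfl⟩
    exact ⟨_, ⟨z, rfl⟩, rfl⟩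
  · rintro ⟨_, ⟨z, rfl⟩, rfl⟩
    exact ⟨z, rfl⟩

theorem IsSemilinearSet.prod {M N : Type*} [AddCommMonoid M] [AddCommMonoid N] {s : Set M}
    {t : Set N} (hs : IsSemilinearSet s) (ht : IsSemilinearSet t) : IsSemilinearSet (s ×ˢ t) := by
  have : s ×ˢ t = AddMonoidHom.inl M N '' s + AddMonoidHom.inr M N '' t := by
    ext ⟨x, y⟩
    simp [Set.mem_add]
  rw [this]
  exact (hs.image _).add (ht.image _)

def Fin.appendAddEquiv (M : Type*) [Add M] (m n : ℕ) :
    (Fin m → M) × (Fin n → M) ≃+ (Fin (m + n) → M) :=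
  { Fin.appendEquiv m n with
    map_add' x y := by
      ext i
      refine Fin.addCases (fun i => ?_) (fun i => ?_) i <;> simp [Fin.appendEquiv] }

theorem Finset.sum_range_add_eq_mk {M N : Type*} [AddCommMonoid M] [AddCommMonoid N]
    {f : ℕ → M × N} {x : ℕ → M} {y : ℕ → N} {m : ℕ}
    (hx : ∀ j < m, f j = (x j, 0)) (hy : ∀ j, f (m + j) = (0, y j)) (n : ℕ) :
    ∑ j ∈ range (m + n), f j = (∑ j ∈ range m, x j, ∑ j ∈ range n, y j) := by
  rw [Finset.sum_range_add, Finset.sum_congr rfl fun j hj => hx j (Finset.mem_range.1 hj),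
    Finset.sum_congr rfl fun j _ => hy j]
  ext <;> simp [Prod.fst_sum, Prod.snd_sum]

theorem Sum.exists_last_isLeft {X Y : Type*} {s : ℕ → X ⊕ Y} (h₀ : (s 0).isLeft)
    (hs : ∀ n, (s n).isRight → (s (n + 1)).isRight) (h : ∃ n, (s n).isRight) :
    ∃ m, (∀ j ≤ m, (s j).isLeft) ∧ ∀ j, m < j → (s j).isRight := by
  classical
  have ht : Nat.find h ≠ 0 := fun h' => Sum.not_isRight.2 h₀ (h' ▸ Nat.find_spec h)
  refine ⟨Nat.find h - 1, fun j hj => ?_, fun j hj => ?_⟩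
  · exact Sum.not_isRight.1 (Nat.find_min h (show j < Nat.find h by omega))
  · obtain ⟨k, rfl⟩ : ∃ k, j = Nat.find h + k := ⟨j - Nat.find h, by omega⟩
    induction k with
    | zero => exact Nat.find_spec h
    | succ k ih => exact hs _ (ih (by omega))

theorem mem_catLang_iff {Sig : Type} {L₁ : Set (List Sig)} {L₂ : Set (ℕ → Sig)} {α : ℕ → Sig} :
    α ∈ CatLang L₁ L₂ ↔ ∃ m, List.ofFn (fun i : Fin m => α i) ∈ L₁ ∧ (fun n => α (m + n)) ∈ L₂ := by
  constructor
  · rintro ⟨u, hu, β, hβ, hpre, hsuf⟩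
    have hu' : List.ofFn (fun i : Fin u.length => α i) = u :=
      List.ext_get (by simp) fun i h₁ h₂ => by simpa using hpre ⟨i, h₂⟩
    exact ⟨u.length, hu'.symm ▸ hu, funext hsuf ▸ hβ⟩
  · rintro ⟨m, hu, hβ⟩
    refine ⟨_, hu, _, hβ, fun i => ?_, fun n => by simp⟩
    simp

namespace PBA

section

variable {Sig : Type} {d : ℕ} (A : PBA Sig d)

def AcceptsPrefix (α : ℕ → Sig) (m : ℕ) : Prop :=
  ∃ (p : ℕ → A.Q) (v : ℕ → Fin d → ℕ), p 0 = A.q0 ∧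
    (∀ j < m, (p j, α j, v j, p (j + 1)) ∈ A.Δ) ∧ p m ∈ A.F ∧ ∑ j ∈ Finset.range m, v j ∈ A.C

theorem finAccepts_ofFn_iff {α : ℕ → Sig} {m : ℕ} :
    A.FinAccepts (List.ofFn fun i : Fin m => α i) ↔ A.AcceptsPrefix α m := by
  simp only [FinAccepts, AcceptsPrefix, List.length_ofFn, List.get_ofFn]
  constructor
  · rintro ⟨p, v, h0, hΔ, hF, hC⟩
    exact ⟨p, v, h0, fun j hj => hΔ ⟨j, by simpa using hj⟩, hF, hC⟩
  · rintro ⟨p, v, h0, hΔ, hF, hC⟩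
    exact ⟨p, v, h0, fun i => hΔ i (by simpa using i.isLt), hF, hC⟩

end

variable {Sig : Type} {d₁ d₂ : ℕ} (A₁ : PBA Sig d₁) (A₂ : PBA Sig d₂)

inductive CatStep : A₁.Q ⊕ A₂.Q → Sig → (Fin (d₁ + d₂) → ℕ) → A₁.Q ⊕ A₂.Q → Prop
  | left {q a w q'} : (q, a, w, q') ∈ A₁.Δ →
      CatStep (.inl q) a (Fin.appendAddEquiv ℕ d₁ d₂ (w, 0)) (.inl q')
  | cross {q a w q'} : q ∈ A₁.F → (A₂.q0, a, w, q') ∈ A₂.Δ →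
      CatStep (.inl q) a (Fin.appendAddEquiv ℕ d₁ d₂ (0, w)) (.inr q')
  | right {q a w q'} : (q, a, w, q') ∈ A₂.Δ →
      CatStep (.inr q) a (Fin.appendAddEquiv ℕ d₁ d₂ (0, w)) (.inr q')

def cat : PBA Sig (d₁ + d₂) where
  Q := A₁.Q ⊕ A₂.Q
  fin := inferInstance
  q0 := .inl A₁.q0
  Δ := {t | CatStep A₁ A₂ t.1 t.2.1 t.2.2.1 t.2.2.2}
  F := .inr '' A₂.F
  C := Fin.appendAddEquiv ℕ d₁ d₂ '' A₁.C ×ˢ A₂.C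

variable {A₁ A₂}

theorem CatStep.isRight_of_isRight {s a x s'} (h : CatStep A₁ A₂ s a x s') (hs : s.isRight) :
    s'.isRight := by
  cases h <;> simp_all

theorem CatStep.exists_of_inl_inl {q a x q'} (h : CatStep A₁ A₂ (.inl q) a x (.inl q')) :
    ∃ w, (q, a, w, q') ∈ A₁.Δ ∧ x = Fin.appendAddEquiv ℕ d₁ d₂ (w, 0) := by
  cases h
  exact ⟨_, ‹_›, rfl⟩

theorem CatStep.mem_F_of_inl_inr {q a x q'} (h : CatStep A₁ A₂ (.inl q) a x (.inr q')) :
    q ∈ A₁.F := by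
  cases h
  assumption

theorem CatStep.exists_of_inr {s a x q'} (h : CatStep A₁ A₂ s a x (.inr q')) :
    ∃ w, (s.elim (fun _ => A₂.q0) id, a, w, q') ∈ A₂.Δ ∧
      x = Fin.appendAddEquiv ℕ d₁ d₂ (0, w) := by
  cases h <;> exact ⟨_, ‹_›, rfl⟩

theorem sum_mem_C_cat_iff (v : ℕ → Fin (d₁ + d₂) → ℕ) (n : ℕ) :
    ∑ j ∈ Finset.range n, v j ∈ (cat A₁ A₂).C ↔
      ∑ j ∈ Finset.range n, (Fin.appendAddEquiv ℕ d₁ d₂).symm (v j) ∈ A₁.C ×ˢ A₂.C := by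
  rw [← map_sum]
  exact Set.mem_image_equiv

theorem mem_prefixLang_cat {α : ℕ → Sig} {m : ℕ} (h₁ : A₁.AcceptsPrefix α m)
    (h₂ : (fun n => α (m + n)) ∈ A₂.PrefixLang) : α ∈ (cat A₁ A₂).PrefixLang := by
  obtain ⟨p₁, v₁, h₀, hΔ, hF, hC⟩ := h₁
  obtain ⟨p₂, v₂, ⟨h₂₀, hΔ₂⟩, hacc₂⟩ := h₂
  let f (n : ℕ) : (Fin d₁ → ℕ) × (Fin d₂ → ℕ) := if n < m then (v₁ n, 0) else (0, v₂ (n - m))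
  refine ⟨fun n => if n ≤ m then .inl (p₁ n) else .inr (p₂ (n - m)),
    fun n => Fin.appendAddEquiv ℕ d₁ d₂ (f n), ⟨by simp [h₀, cat], fun i => ?_⟩, fun N => ?_⟩
  · show CatStep A₁ A₂ _ _ _ _
    rcases lt_trichotomy i m with hi | rfl | hi
    · simpa [f, hi, hi.le, Nat.succ_le_of_lt hi] using CatStep.left (hΔ i hi)
    · simpa [f] using CatStep.cross (A₂ := A₂) hF (h₂₀ ▸ hΔ₂ 0)
    · have := CatStep.right (A₁ := A₁) (hΔ₂ (i - m))
      simpa [f, hi.le, hi.not_ge, show ¬ i + 1 ≤ m by omega, show i + 1 - m = i - m + 1 by omega,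
        Nat.add_sub_cancel' hi.le, hi.not_gt] using this
  · obtain ⟨n, hNn, hn, hF₂, hC₂⟩ := hacc₂ N
    refine ⟨m + n, by omega, by omega, ?_, ?_⟩
    · exact ⟨p₂ n, hF₂, by simp [show ¬ m + n ≤ m by omega]⟩
    · rw [sum_mem_C_cat_iff]
      simp only [AddEquiv.symm_apply_apply]
      rw [Finset.sum_range_add_eq_mk (x := v₁) (y := v₂) (fun j hj => by simp [f, hj])
        (fun j => by simp [f])]
      exact ⟨hC, hC₂⟩

theorem exists_split_of_isRun_cat {α : ℕ → Sig} {p : ℕ → A₁.Q ⊕ A₂.Q}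
    {v : ℕ → Fin (d₁ + d₂) → ℕ} (hrun : IsRun (cat A₁ A₂).q0 (cat A₁ A₂).Δ α p v)
    (hright : ∃ n, (p n).isRight) :
    ∃ m, ∃ (p₁ : ℕ → A₁.Q) (v₁ : ℕ → Fin d₁ → ℕ) (p₂ : ℕ → A₂.Q) (v₂ : ℕ → Fin d₂ → ℕ),
      p₁ 0 = A₁.q0 ∧ (∀ j < m, (p₁ j, α j, v₁ j, p₁ (j + 1)) ∈ A₁.Δ) ∧ p₁ m ∈ A₁.F ∧
      IsRun A₂.q0 A₂.Δ (fun n => α (m + n)) p₂ v₂ ∧ (∀ j, p (m + j + 1) = .inr (p₂ (j + 1))) ∧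
      ∀ n, ∑ j ∈ Finset.range (m + n), (Fin.appendAddEquiv ℕ d₁ d₂).symm (v j) =
        (∑ j ∈ Finset.range m, v₁ j, ∑ j ∈ Finset.range n, v₂ j) := by
  obtain ⟨hp₀, hstep⟩ := hrun
  replace hstep : ∀ n, CatStep A₁ A₂ (p n) (α n) (v n) (p (n + 1)) := hstep
  obtain ⟨m, hleft, hright⟩ := Sum.exists_last_isLeft (by simp [hp₀, cat])
    (fun n => (hstep n).isRight_of_isRight) hright
  let p₁ (j : ℕ) : A₁.Q := (p j).elim id fun _ => A₁.q0
  let p₂ (j : ℕ) : A₂.Q := (p (m + j)).elim (fun _ => A₂.q0) id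
  let f (j : ℕ) := (Fin.appendAddEquiv ℕ d₁ d₂).symm (v j)
  have hp₁ : ∀ j ≤ m, p j = .inl (p₁ j) := fun j hj => by
    obtain ⟨q, hq⟩ := Sum.isLeft_iff.1 (hleft j hj)
    simp only [p₁, hq]; rfl
  have hp₂ : ∀ j, p (m + j + 1) = .inr (p₂ (j + 1)) := fun j => by
    obtain ⟨q, hq⟩ := Sum.isRight_iff.1 (hright (m + j + 1) (by omega))
    simp only [p₂, ← add_assoc, hq]; rfl
  have h₁ : ∀ j < m, (p₁ j, α j, (f j).1, p₁ (j + 1)) ∈ A₁.Δ ∧ f j = ((f j).1, 0) := by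
    intro j hj
    have := hstep j
    rw [hp₁ j hj.le, hp₁ (j + 1) hj] at this
    obtain ⟨w, hw, hv⟩ := this.exists_of_inl_inl
    simpa [f, hv] using hw
  have h₂ : ∀ j, (p₂ j, α (m + j), (f (m + j)).2, p₂ (j + 1)) ∈ A₂.Δ ∧
      f (m + j) = (0, (f (m + j)).2) := by
    intro j
    have := hstep (m + j)
    rw [hp₂ j] at this
    obtain ⟨w, hw, hv⟩ := this.exists_of_inr
    simpa [f, hv] using hw
  have hF : p₁ m ∈ A₁.F := by
    have := hstep m
    rw [hp₁ m le_rfl, hp₂ 0] at this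
    exact this.mem_F_of_inl_inr
  exact ⟨m, p₁, fun j => (f j).1, p₂, fun j => (f (m + j)).2, by simp only [p₁, hp₀]; rfl,
    fun j hj => (h₁ j hj).1, hF, ⟨by simp only [p₂, add_zero, hp₁ m le_rfl]; rfl,
    fun j => (h₂ j).1⟩, hp₂, Finset.sum_range_add_eq_mk (fun j hj => (h₁ j hj).2) (fun j => (h₂ j).2)⟩

theorem exists_of_mem_prefixLang_cat {α : ℕ → Sig} (h : α ∈ (cat A₁ A₂).PrefixLang) :
    ∃ m, A₁.AcceptsPrefix α m ∧ (fun n => α (m + n)) ∈ A₂.PrefixLang := by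
  obtain ⟨p, v, hrun, hacc⟩ := h
  have hright : ∃ n, (p n).isRight := by
    obtain ⟨n, -, -, ⟨q, -, hq⟩, -⟩ := hacc 0
    exact ⟨n, by simp [← hq]⟩
  obtain ⟨m, p₁, v₁, p₂, v₂, h₀, hΔ, hF, hrun₂, hp₂, hsum⟩ :=
    exists_split_of_isRun_cat hrun hright
  have hC : ∀ n, ∑ j ∈ Finset.range (m + n), v j ∈ (cat A₁ A₂).C →
      ∑ j ∈ Finset.range m, v₁ j ∈ A₁.C ∧ ∑ j ∈ Finset.range n, v₂ j ∈ A₂.C := fun n hn => by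
    rwa [sum_mem_C_cat_iff, hsum] at hn
  refine ⟨m, ⟨p₁, v₁, h₀, hΔ, hF, ?_⟩, p₂, v₂, hrun₂, fun N => ?_⟩
  · obtain ⟨n, hn, -, -, hnC⟩ := hacc (m + 1)
    obtain ⟨k, rfl⟩ : ∃ k, n = m + k := ⟨n - m, by omega⟩
    exact (hC k hnC).1
  · obtain ⟨n, hn, -, ⟨q, hq, hpn⟩, hnC⟩ := hacc (m + N + 1)
    obtain ⟨k, rfl⟩ : ∃ k, n = m + (k + 1) := ⟨n - m - 1, by omega⟩
    rw [← add_assoc, hp₂ k, Sum.inr.injEq] at hpn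
    exact ⟨k + 1, by omega, by omega, hpn ▸ hq, (hC _ hnC).2⟩

theorem prefixLang_cat : (cat A₁ A₂).PrefixLang = CatLang A₁.FinLang A₂.PrefixLang := by
  ext α
  simp only [mem_catLang_iff, FinLang, mem_ofPred_eq, finAccepts_ofFn_iff]
  exact ⟨exists_of_mem_prefixLang_cat, fun ⟨_, h₁, h₂⟩ => mem_prefixLang_cat h₁ h₂⟩

theorem isSemilinear_cat_C (h₁ : IsSemilinear A₁.C) (h₂ : IsSemilinear A₂.C) :
    IsSemilinear (cat A₁ A₂).C :=
  isSemilinear_iff_isSemilinearSet.2 <|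
    ((isSemilinear_iff_isSemilinearSet.1 h₁).prod (isSemilinear_iff_isSemilinearSet.1 h₂)).image _

end PBA

/-- If `L₁` is Parikh-recognizable and `L₂` is PPBA-recognizable, then
the concatenation `L₁L₂` is PPBA-recognizable. -/
theorem PPBA_closed_cat {Sig : Type} (L₁ : Set (List Sig)) (L₂ : Set (ℕ → Sig))
    (h₁ : ParikhRec L₁) (h₂ : PPBARec L₂) : PPBARec (CatLang L₁ L₂) := by
  obtain ⟨d₁, A₁, hC₁, rfl⟩ := h₁
  obtain ⟨d₂, A₂, hC₂, rfl⟩ := h₂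
  exact ⟨d₁ + d₂, A₁.cat A₂, PBA.isSemilinear_cat_C hC₁ hC₂, PBA.prefixLang_cat⟩
end
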